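/- arXiv:1803.03013 — 2 statements merged into one kernel-verified Lean document; each statement's English description precedes it below -/
import Mathlib

section
/- Let Ω be a symmetric oval with boundary function f, curvature κ(a,0) = −g''(0) at (a,0), and set A(x) := f(x) − √(2(a−x)/κ(a,0)) for 0 ≤ x < a. Then A'(x) = O(√(a−x)) as x ↗ a; that is, there exist C > 0 and δ > 0 such that |A'(x)| ≤ C·√(a−x) for a − δ < x < a. In particular A extends continuously differentiably to x = a with A(a) = 0 and A'(a) = 0. -/
noncomputable section

open MeasureTheory Filter Set Pointwise Classical

/-- A symmetric oval: a compact convex planar domain, symmetric under reflections in the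
coordinate axes, with smooth boundary of nowhere vanishing curvature. It is described by the
function `f` whose graph over `[-a,a]` is the top half of the boundary, together with the
inverse function `g` describing the right half of the boundary. -/
structure SymmetricOval where
  a : ℝ
  b : ℝ
  f : ℝ → ℝ
  g : ℝ → ℝ
  a_pos : 0 < a
  b_pos : 0 < b
  f_even : ∀ x, f (-x) = f x
  g_even : ∀ y, g (-y) = g y
  f_zero : f 0 = b
  f_a : f a = 0
  f_cont : ContinuousOn f (Set.Icc (-a) a)
  g_cont : ContinuousOn g (Set.Icc (-b) b)
  f_smooth : ContDiffOn ℝ (⊤ : ℕ∞) f (Set.Ioo (-a) a)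
  g_smooth : ContDiffOn ℝ (⊤ : ℕ∞) g (Set.Ioo (-b) b)
  f_anti : StrictAntiOn f (Set.Icc 0 a)
  f_conc : ∀ x ∈ Set.Ioo (-a) a, deriv (deriv f) x < 0
  g_conc : ∀ y ∈ Set.Ioo (-b) b, deriv (deriv g) y < 0
  g_inv_f : ∀ x ∈ Set.Icc 0 a, g (f x) = x
  f_inv_g : ∀ y ∈ Set.Icc 0 b, f (g y) = y

namespace SymmetricOval

variable (O : SymmetricOval)

/-- The region `Ω ⊂ ℝ²` bounded by the oval. -/
def region : Set (ℝ × ℝ) := {p | |p.1| ≤ O.a ∧ |p.2| ≤ O.f |p.1|}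

/-- The area of the oval. -/
def area : ℝ := (volume O.region).toReal

/-- `ψ_Ω(R) = Σ_{(m,n) ∈ ℤ² ∩ RΩ} Λ(|m|)Λ(|n|)`. -/
def psi (R : ℝ) : ℝ :=
  ∑' p : ℤ × ℤ,
    if ((p.1 : ℝ), (p.2 : ℝ)) ∈ R • O.region then
      ArithmeticFunction.vonMangoldt p.1.natAbs * ArithmeticFunction.vonMangoldt p.2.natAbs
    else 0

/-- `π_Ω(R)`: the number of lattice points in `RΩ` both of whose coordinates are
(up to sign) prime. -/
def primeCount (R : ℝ) : ℕ :=
  Nat.card {p : ℤ × ℤ // ((p.1 : ℝ), (p.2 : ℝ)) ∈ R • O.region ∧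
    p.1.natAbs.Prime ∧ p.2.natAbs.Prime}

/-- The Mellin transform `I₁(ρ) = ∫₀^a f(x) x^{ρ-1} dx`. -/
def I1 (ρ : ℂ) : ℂ := ∫ x in (0:ℝ)..O.a, (O.f x : ℂ) * (x : ℂ) ^ (ρ - 1)

/-- The Mellin transform `I₂(ρ) = ∫₀^b g(y) y^{ρ-1} dy`. -/
def I2 (ρ : ℂ) : ℂ := ∫ y in (0:ℝ)..O.b, (O.g y : ℂ) * (y : ℂ) ^ (ρ - 1)

end SymmetricOval

/-- The set of nontrivial zeros of the Riemann zeta function. -/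
def zetaZeros : Set ℂ := {ρ | riemannZeta ρ = 0 ∧ 0 < ρ.re ∧ ρ.re < 1}

namespace SymmetricOval

variable (O : SymmetricOval)

/-- `H̃_Ω(R) = -4 Σ_ρ R^{ρ-1/2} (I₁(ρ)+I₂(ρ))`, as a complex number. -/
def HtildeC (R : ℝ) : ℂ :=
  -4 * ∑' ρ : zetaZeros, (R : ℂ) ^ ((ρ : ℂ) - 1/2) * (O.I1 ρ + O.I2 ρ)

/-- `H̃_Ω(R)`, which is real (under RH the sum is invariant under conjugation). -/
def Htilde (R : ℝ) : ℝ := (O.HtildeC R).re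

end SymmetricOval


set_option maxHeartbeats 1000000

private lemma mvt_pow_bound {φ φ' : ℝ → ℝ} {c M : ℝ} {k : ℕ}
    (hder : ∀ t ∈ Set.Icc (0:ℝ) c, HasDerivAt φ (φ' t) t)
    (h0 : φ 0 = 0)
    (hb : ∀ t ∈ Set.Icc (0:ℝ) c, |φ' t| ≤ M * t ^ k)
    (hM : 0 ≤ M) :
    ∀ y ∈ Set.Icc (0:ℝ) c, |φ y| ≤ M * y ^ (k+1) := by
  intro y hy
  rcases eq_or_lt_of_le hy.1 with h | h
  · simp [← h, h0, hM]
  · obtain ⟨ξ, hξ, hslope⟩ := exists_hasDerivAt_eq_slope φ φ' h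
      (fun t ht => (hder t ⟨ht.1, ht.2.trans hy.2⟩).continuousAt.continuousWithinAt)
      (fun t ht => hder t ⟨ht.1.le, ht.2.le.trans hy.2⟩)
    have hφy : φ y = φ' ξ * y := by
      rw [hslope, h0]; field_simp; ring
    rw [hφy, abs_mul, abs_of_pos h]
    have h1 : |φ' ξ| ≤ M * ξ ^ k := hb ξ ⟨hξ.1.le, hξ.2.le.trans hy.2⟩
    have h2 : ξ ^ k ≤ y ^ k := pow_le_pow_left₀ hξ.1.le hξ.2.le k
    calc |φ' ξ| * y ≤ (M * ξ ^ k) * y := by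
          exact mul_le_mul_of_nonneg_right h1 h.le
      _ ≤ (M * y ^ k) * y := by
          have := mul_le_mul_of_nonneg_left h2 hM
          nlinarith
      _ = M * y ^ (k+1) := by ring

private lemma oval_key (O : SymmetricOval) :
    ∃ C > 0, ∃ δ > 0, ∀ x : ℝ, O.a - δ < x → x < O.a →
      |deriv (fun t => O.f t - Real.sqrt (2 * (O.a - t) / (-deriv (deriv O.g) 0))) x| ≤
        C * Real.sqrt (O.a - x) := by
  obtain ⟨g1, hg1def⟩ : ∃ w : ℝ → ℝ, w = deriv O.g := ⟨_, rfl⟩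
  obtain ⟨g2, hg2def⟩ : ∃ w : ℝ → ℝ, w = deriv g1 := ⟨_, rfl⟩
  obtain ⟨g3, hg3def⟩ : ∃ w : ℝ → ℝ, w = deriv g2 := ⟨_, rfl⟩
  obtain ⟨g4, hg4def⟩ : ∃ w : ℝ → ℝ, w = deriv g3 := ⟨_, rfl⟩
  obtain ⟨κ, hκdef⟩ : ∃ w : ℝ, w = -deriv (deriv O.g) 0 := ⟨_, rfl⟩
  rw [show (-deriv (deriv O.g) 0) = κ from hκdef.symm]
  have hb := O.b_pos
  have ha := O.a_pos
  have h0mem : (0:ℝ) ∈ Set.Ioo (-O.b) O.b := ⟨by linarith, hb⟩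
  have hκ : 0 < κ := by
    rw [hκdef]; linarith [O.g_conc 0 h0mem]
  have hg20 : g2 0 = -κ := by rw [hg2def, hg1def, hκdef, neg_neg]
  have hopen : IsOpen (Set.Ioo (-O.b) O.b) := isOpen_Ioo
  have hg : ContDiffOn ℝ (⊤ : ℕ∞) O.g (Set.Ioo (-O.b) O.b) := O.g_smooth
  have hg1 : ContDiffOn ℝ (⊤ : ℕ∞) g1 (Set.Ioo (-O.b) O.b) := by
    rw [hg1def]; exact hg.deriv_of_isOpen hopen (by simp)
  have hg2 : ContDiffOn ℝ (⊤ : ℕ∞) g2 (Set.Ioo (-O.b) O.b) := by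
    rw [hg2def]; exact hg1.deriv_of_isOpen hopen (by simp)
  have hg3 : ContDiffOn ℝ (⊤ : ℕ∞) g3 (Set.Ioo (-O.b) O.b) := by
    rw [hg3def]; exact hg2.deriv_of_isOpen hopen (by simp)
  have hg4 : ContDiffOn ℝ (⊤ : ℕ∞) g4 (Set.Ioo (-O.b) O.b) := by
    rw [hg4def]; exact hg3.deriv_of_isOpen hopen (by simp)
  have hdg : ∀ t ∈ Set.Ioo (-O.b) O.b, HasDerivAt O.g (g1 t) t := fun t ht => by
    rw [hg1def]
    exact ((hg.contDiffAt (hopen.mem_nhds ht)).differentiableAt (by simp)).hasDerivAt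
  have hdg1 : ∀ t ∈ Set.Ioo (-O.b) O.b, HasDerivAt g1 (g2 t) t := fun t ht => by
    rw [hg2def]
    exact ((hg1.contDiffAt (hopen.mem_nhds ht)).differentiableAt (by simp)).hasDerivAt
  have hdg2 : ∀ t ∈ Set.Ioo (-O.b) O.b, HasDerivAt g2 (g3 t) t := fun t ht => by
    rw [hg3def]
    exact ((hg2.contDiffAt (hopen.mem_nhds ht)).differentiableAt (by simp)).hasDerivAt
  have hdg3 : ∀ t ∈ Set.Ioo (-O.b) O.b, HasDerivAt g3 (g4 t) t := fun t ht => by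
    rw [hg4def]
    exact ((hg3.contDiffAt (hopen.mem_nhds ht)).differentiableAt (by simp)).hasDerivAt
  clear hg1def hg2def hg3def hg4def hκdef
  -- oddness/evenness of derivatives
  have hodd1 : ∀ t ∈ Set.Ioo (-O.b) O.b, g1 (-t) = -g1 t := by
    intro t ht
    have hnt : -t ∈ Set.Ioo (-O.b) O.b := ⟨by linarith [ht.2], by linarith [ht.1]⟩
    have h1 : HasDerivAt O.g (g1 (-t)) (-t) := hdg _ hnt
    have h2 : HasDerivAt (fun s => O.g (-s)) (g1 (-t) * (-1)) t :=
      h1.comp t (hasDerivAt_neg t)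
    have h3 : (fun s => O.g (-s)) = O.g := funext O.g_even
    rw [h3] at h2
    have := h2.unique (hdg t ht)
    linarith
  have heven2 : ∀ t ∈ Set.Ioo (-O.b) O.b, g2 (-t) = g2 t := by
    intro t ht
    have hnt : -t ∈ Set.Ioo (-O.b) O.b := ⟨by linarith [ht.2], by linarith [ht.1]⟩
    have h1 : HasDerivAt g1 (g2 (-t)) (-t) := hdg1 _ hnt
    have h2 : HasDerivAt (fun s => g1 (-s)) (g2 (-t) * (-1)) t :=
      h1.comp t (hasDerivAt_neg t)
    have heq : (fun s => -g1 s) =ᶠ[nhds t] (fun s => g1 (-s)) := by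
      filter_upwards [hopen.mem_nhds ht] with s hs
      rw [hodd1 s hs]
    have h3 : HasDerivAt (fun s => -g1 s) (g2 (-t) * (-1)) t := h2.congr_of_eventuallyEq heq
    have h4 : HasDerivAt (fun s => -g1 s) (-g2 t) t := (hdg1 t ht).neg
    have := h3.unique h4
    linarith
  have hodd3 : ∀ t ∈ Set.Ioo (-O.b) O.b, g3 (-t) = -g3 t := by
    intro t ht
    have hnt : -t ∈ Set.Ioo (-O.b) O.b := ⟨by linarith [ht.2], by linarith [ht.1]⟩
    have h1 : HasDerivAt g2 (g3 (-t)) (-t) := hdg2 _ hnt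
    have h2 : HasDerivAt (fun s => g2 (-s)) (g3 (-t) * (-1)) t :=
      h1.comp t (hasDerivAt_neg t)
    have heq : g2 =ᶠ[nhds t] (fun s => g2 (-s)) := by
      filter_upwards [hopen.mem_nhds ht] with s hs
      rw [heven2 s hs]
    have h3 : HasDerivAt g2 (g3 (-t) * (-1)) t := h2.congr_of_eventuallyEq heq
    have := h3.unique (hdg2 t ht)
    linarith
  have hg1zero : g1 0 = 0 := by have := hodd1 0 h0mem; simp at this; linarith
  have hg3zero : g3 0 = 0 := by have := hodd3 0 h0mem; simp at this; linarith
  -- bound on g4 near 0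
  have hg4cont : ContinuousAt g4 0 := (hg4.continuousOn.continuousAt (hopen.mem_nhds h0mem))
  obtain ⟨M, hMdef⟩ : ∃ w : ℝ, w = |g4 0| + 1 := ⟨_, rfl⟩
  have hM : 0 < M := by rw [hMdef]; positivity
  have hev : ∀ᶠ t in nhds (0:ℝ), |g4 t| ≤ M := by
    have h1 : ∀ᶠ t in nhds (0:ℝ), g4 t ∈ Set.Ioo (g4 0 - 1) (g4 0 + 1) :=
      hg4cont (Ioo_mem_nhds (by linarith) (by linarith))
    filter_upwards [h1] with t ht
    rw [hMdef]
    cases' abs_cases (g4 0) with h h <;> cases' abs_cases (g4 t) with h' h' <;>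
      [skip; skip; skip; skip] <;> simp [Set.mem_Ioo] at ht <;> linarith [h.1, h'.1]
  obtain ⟨c0, hc0, hc0b⟩ := Metric.eventually_nhds_iff.mp hev
  -- choice of the cutoff c
  obtain ⟨c, hcdef⟩ : ∃ w : ℝ, w = min (c0/2) (min (O.b/2) (Real.sqrt (κ/(4*M)))) := ⟨_, rfl⟩
  have hc : 0 < c := by
    rw [hcdef]
    exact lt_min (by linarith) (lt_min (by linarith) (Real.sqrt_pos.mpr (by positivity)))
  have hcb : c < O.b := by
    rw [hcdef]
    calc min (c0/2) (min (O.b/2) (Real.sqrt (κ/(4*M)))) ≤ O.b/2 :=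
          le_trans (min_le_right _ _) (min_le_left _ _)
      _ < O.b := by linarith
  have hcM : M * c^2 ≤ κ/4 := by
    have h1 : c ≤ Real.sqrt (κ/(4*M)) := by
      rw [hcdef]; exact le_trans (min_le_right _ _) (min_le_right _ _)
    have h2 : c^2 ≤ κ/(4*M) := by
      calc c^2 ≤ (Real.sqrt (κ/(4*M)))^2 := by
            exact pow_le_pow_left₀ hc.le h1 2
        _ = κ/(4*M) := Real.sq_sqrt (by positivity)
    calc M * c^2 ≤ M * (κ/(4*M)) := by nlinarith
      _ = κ/4 := by field_simp
  have hsub : Set.Icc (0:ℝ) c ⊆ Set.Ioo (-O.b) O.b := fun t ht =>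
    ⟨by linarith [ht.1], lt_of_le_of_lt ht.2 hcb⟩
  have hg4b : ∀ t ∈ Set.Icc (0:ℝ) c, |g4 t| ≤ M := by
    intro t ht
    apply hc0b
    rw [Real.dist_eq, sub_zero, abs_of_nonneg ht.1]
    calc t ≤ c := ht.2
      _ ≤ c0/2 := by rw [hcdef]; exact min_le_left _ _
      _ < c0 := by linarith
  -- Taylor-type bounds
  have T1 : ∀ y ∈ Set.Icc (0:ℝ) c, |g3 y| ≤ M * y ^ 1 := by
    apply mvt_pow_bound (φ' := g4) (k := 0)
      (fun t ht => hdg3 t (hsub ht)) hg3zero _ hM.le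
    intro t ht; simpa using hg4b t ht
  have T2 : ∀ y ∈ Set.Icc (0:ℝ) c, |g2 y - g2 0| ≤ M * y ^ 2 := by
    apply mvt_pow_bound (φ' := g3) (k := 1)
      (fun t ht => (hdg2 t (hsub ht)).sub_const (g2 0)) (sub_self _) T1 hM.le
  have T3 : ∀ y ∈ Set.Icc (0:ℝ) c, |g1 y + κ * y| ≤ M * y ^ 3 := by
    have := mvt_pow_bound (φ := fun t => g1 t - g2 0 * t)
      (φ' := fun t => g2 t - g2 0) (k := 2)
      (fun t ht => (hdg1 t (hsub ht)).sub
        (by simpa using (hasDerivAt_id t).const_mul (g2 0))) (by simp [hg1zero]) T2 hM.le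
    intro y hy
    have h := this y hy
    rw [hg20] at h
    convert h using 2
    ring
  have T4 : ∀ y ∈ Set.Icc (0:ℝ) c, |(O.a - O.g y) - κ * y^2/2| ≤ M * y ^ 4 := by
    have hga : O.g 0 = O.a := by
      have := O.g_inv_f O.a ⟨ha.le, le_refl _⟩
      rwa [O.f_a] at this
    have hd : ∀ t ∈ Set.Icc (0:ℝ) c,
        HasDerivAt (fun t => O.g t - O.g 0 + κ * t^2/2) (g1 t + κ * t) t := by
      intro t ht
      have h1 : HasDerivAt (fun t : ℝ => κ * t^2/2) (κ * t) t := by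
        have := ((hasDerivAt_pow 2 t).const_mul κ).div_const 2
        refine this.congr_deriv ?_
        ring
      exact ((hdg t (hsub ht)).sub_const (O.g 0)).add h1
    have := mvt_pow_bound (φ := fun t => O.g t - O.g 0 + κ * t^2/2)
      (φ' := fun t => g1 t + κ * t) (k := 3) hd (by simp) T3 hM.le
    intro y hy
    have h := this y hy
    rw [hga] at h
    rw [show O.a - O.g y - κ * y^2/2 = -(O.g y - O.a + κ * y^2/2) by ring, abs_neg]
    exact h
  -- core pointwise estimate
  have hcore : ∀ y ∈ Set.Ioc (0:ℝ) c,
      κ*y^2/4 ≤ O.a - O.g y ∧ g1 y ≤ -(κ*y/2) ∧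
      |(g1 y)⁻¹ + (Real.sqrt (2*κ*(O.a - O.g y)))⁻¹| ≤ 12*M/κ^2 * y := by
    intro y hy
    have hy0 : 0 < y := hy.1
    have hyc : y ∈ Set.Icc (0:ℝ) c := ⟨hy0.le, hy.2⟩
    have hMy2 : M * y^2 ≤ κ/4 := by
      have hyc2 : y^2 ≤ c^2 := pow_le_pow_left₀ hy0.le hy.2 2
      nlinarith [hyc2]
    have hMy4 : M * y^4 ≤ (κ/4) * y^2 := by nlinarith
    have h4 := T4 y hyc
    rw [abs_le] at h4
    obtain ⟨h, hhdef⟩ : ∃ w : ℝ, w = O.a - O.g y := ⟨_, rfl⟩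
    rw [show O.a - O.g y = h from hhdef.symm]
    rw [show O.a - O.g y = h from hhdef.symm] at h4
    have hlow : κ*y^2/4 ≤ h := by nlinarith [h4.1]
    have hup : h ≤ κ*y^2 := by nlinarith [h4.2]
    have hhpos : 0 < h := lt_of_lt_of_le (by positivity) hlow
    have h3 := T3 y hyc
    rw [abs_le] at h3
    have hMy3 : M * y^3 ≤ (κ/4) * y := by nlinarith
    have hg1neg : g1 y ≤ -(κ*y/2) := by nlinarith [h3.2, hMy3, mul_pos hκ hy0]
    refine ⟨hlow, hg1neg, ?_⟩
    obtain ⟨u, hudef⟩ : ∃ w : ℝ, w = -g1 y := ⟨_, rfl⟩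
    have hu : κ*y/2 ≤ u := by rw [hudef]; linarith
    have hupos : 0 < u := lt_of_lt_of_le (by positivity) hu
    obtain ⟨s, hsdef⟩ : ∃ w : ℝ, w = Real.sqrt (2*κ*h) := ⟨_, rfl⟩
    rw [show Real.sqrt (2*κ*h) = s from hsdef.symm]
    have hs_sq : s^2 = 2*κ*h := by rw [hsdef]; exact Real.sq_sqrt (by positivity)
    have hs_nonneg : 0 ≤ s := by rw [hsdef]; exact Real.sqrt_nonneg _
    have hs_low : κ*y/2 ≤ s := by
      nlinarith [hs_sq, hs_nonneg, hlow]
    have hspos : 0 < s := lt_of_lt_of_le (by positivity) hs_low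
    have hs_close : |s - κ*y| ≤ 2*M*y^3 := by
      have hprod : (s - κ*y)*(s + κ*y) = 2*κ*(h - κ*y^2/2) := by
        have h5 : s^2 - (κ*y)^2 = 2*κ*(h - κ*y^2/2) := by rw [hs_sq]; ring
        nlinarith [h5]
      have habs : |s - κ*y| * (κ*y) ≤ |s - κ*y| * (s + κ*y) :=
        mul_le_mul_of_nonneg_left (by linarith) (abs_nonneg _)
      have h2' : |s - κ*y| * (s + κ*y) = |2*κ*(h - κ*y^2/2)| := by
        rw [← abs_of_nonneg (by positivity : (0:ℝ) ≤ s + κ*y), ← abs_mul, hprod]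
      have h3' : |2*κ*(h - κ*y^2/2)| ≤ (2*M*y^3) * (κ*y) := by
        rw [abs_mul, abs_of_nonneg (by positivity : (0:ℝ) ≤ 2*κ)]
        have : |h - κ*y^2/2| ≤ M*y^4 := by rw [abs_le]; exact h4
        nlinarith [this]
      have hfinal : |s - κ*y| * (κ*y) ≤ (2*M*y^3) * (κ*y) := by
        calc |s - κ*y| * (κ*y) ≤ |s - κ*y| * (s + κ*y) := habs
          _ = |2*κ*(h - κ*y^2/2)| := h2'
          _ ≤ (2*M*y^3) * (κ*y) := h3'
      exact le_of_mul_le_mul_right hfinal (by positivity)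
    have hus : |u - s| ≤ 3*M*y^3 := by
      have h1 : |u - κ*y| ≤ M*y^3 := by
        rw [hudef, abs_le]; constructor <;> nlinarith [h3.1, h3.2]
      have h2' : |κ*y - s| ≤ 2*M*y^3 := by rwa [abs_sub_comm] at hs_close
      calc |u - s| = |(u - κ*y) + (κ*y - s)| := by ring_nf
        _ ≤ |u - κ*y| + |κ*y - s| := abs_add_le _ _
        _ ≤ 3*M*y^3 := by linarith
    have hune : u ≠ 0 := ne_of_gt hupos
    have hsne : s ≠ 0 := ne_of_gt hspos
    have hD : (g1 y)⁻¹ + s⁻¹ = (u - s)/(u*s) := by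
      rw [show g1 y = -u by rw [hudef]; ring]
      rw [eq_div_iff (by positivity : u*s ≠ 0)]
      field_simp [hune, hsne]
      ring
    rw [hD, abs_div, abs_of_pos (by positivity : (0:ℝ) < u*s),
      div_le_iff₀ (by positivity : (0:ℝ) < u*s)]
    have hus_low : κ^2*y^2/4 ≤ u*s := by nlinarith [hu, hs_low, hupos, hspos]
    calc |u - s| ≤ 3*M*y^3 := hus
      _ = 12*M/κ^2*y * (κ^2*y^2/4) := by field_simp; ring
      _ ≤ 12*M/κ^2*y * (u*s) :=
        mul_le_mul_of_nonneg_left hus_low (by positivity)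
  -- choose δ
  have hf_tendsto : Filter.Tendsto O.f (nhdsWithin O.a (Set.Iio O.a)) (nhds 0) := by
    have h1 : ContinuousWithinAt O.f (Set.Icc (-O.a) O.a) O.a :=
      O.f_cont O.a ⟨by linarith, le_refl _⟩
    have h2 := h1.tendsto
    rw [O.f_a] at h2
    have h3 : nhdsWithin O.a (Set.Iio O.a) = nhdsWithin O.a (Set.Ioo (-O.a) O.a) :=
      (nhdsWithin_Ioo_eq_nhdsLT (by linarith : -O.a < O.a)).symm
    rw [h3]
    exact h2.mono_left (nhdsWithin_mono _ Set.Ioo_subset_Icc_self)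
  have hev2 : {x : ℝ | O.f x < c} ∈ nhdsWithin O.a (Set.Iio O.a) :=
    hf_tendsto (Iio_mem_nhds hc)
  obtain ⟨l, hl, hlsub⟩ := mem_nhdsLT_iff_exists_Ioo_subset.mp hev2
  rw [Set.mem_Iio] at hl
  have hsqrtκ : 0 < Real.sqrt κ := Real.sqrt_pos.mpr hκ
  refine ⟨24*M/(κ^2*Real.sqrt κ), by positivity, min (O.a - l) O.a,
    lt_min (by linarith) ha, ?_⟩
  intro x hx1 hx2
  have hδ1 : min (O.a - l) O.a ≤ O.a - l := min_le_left _ _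
  have hδ2 : min (O.a - l) O.a ≤ O.a := min_le_right _ _
  have hx0 : 0 < x := by linarith
  have hxl : l < x := by linarith
  have hfxc : O.f x < c := hlsub ⟨hxl, hx2⟩
  have hfx0 : 0 < O.f x := by
    have := O.f_anti ⟨hx0.le, hx2.le⟩ ⟨ha.le, le_refl _⟩ hx2
    rwa [O.f_a] at this
  obtain ⟨hlow, hg1neg, hbound⟩ := hcore (O.f x) ⟨hfx0, hfxc.le⟩
  have hgy : O.g (O.f x) = x := O.g_inv_f x ⟨hx0.le, hx2.le⟩
  rw [hgy] at hlow hbound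
  have hax : 0 < O.a - x := by linarith
  have hymem : O.f x ∈ Set.Ioo (-O.b) O.b := ⟨by linarith, lt_of_lt_of_le hfxc hcb.le⟩
  have hg1ne : g1 (O.f x) ≠ 0 := by
    have : 0 < κ * O.f x / 2 := by positivity
    intro hcon
    rw [hcon] at hg1neg
    linarith
  have hfd : HasDerivAt O.f (g1 (O.f x))⁻¹ x := by
    apply HasDerivAt.of_local_left_inverse
      (O.f_cont.continuousAt (Icc_mem_nhds (by linarith) hx2))
      (hdg (O.f x) hymem) hg1ne
    filter_upwards [Ioo_mem_nhds hx0 hx2] with t ht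
    exact O.g_inv_f t ⟨ht.1.le, ht.2.le⟩
  have hin : HasDerivAt (fun t : ℝ => 2*(O.a - t)/κ) (2*(-1)/κ) x :=
    (((hasDerivAt_id x).const_sub O.a).const_mul 2).div_const κ
  have hne2 : 2*(O.a - x)/κ ≠ 0 := by positivity
  have hsq : HasDerivAt (fun t : ℝ => Real.sqrt (2*(O.a - t)/κ))
      ((2*(-1)/κ) / (2*Real.sqrt (2*(O.a - x)/κ))) x := hin.sqrt hne2
  have hA : HasDerivAt (fun t : ℝ => O.f t - Real.sqrt (2*(O.a - t)/κ))
      ((g1 (O.f x))⁻¹ - (2*(-1)/κ)/(2*Real.sqrt (2*(O.a - x)/κ))) x := hfd.sub hsq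
  rw [hA.deriv]
  have hsqrtpos : 0 < Real.sqrt (2*(O.a - x)/κ) := Real.sqrt_pos.mpr (by positivity)
  have heq : Real.sqrt (2*κ*(O.a - x)) = κ * Real.sqrt (2*(O.a - x)/κ) := by
    rw [show 2*κ*(O.a - x) = κ^2 * (2*(O.a - x)/κ) by field_simp,
      Real.sqrt_mul (by positivity) , Real.sqrt_sq hκ.le]
  have hkey : (g1 (O.f x))⁻¹ - (2*(-1)/κ)/(2*Real.sqrt (2*(O.a - x)/κ)) =
      (g1 (O.f x))⁻¹ + (Real.sqrt (2*κ*(O.a - x)))⁻¹ := by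
    obtain ⟨w, hw⟩ : ∃ w : ℝ, w = Real.sqrt (2*(O.a - x)/κ) := ⟨_, rfl⟩
    rw [heq, ← hw]
    have hwpos : 0 < w := by rw [hw]; exact hsqrtpos
    have h1 : w ≠ 0 := ne_of_gt hwpos
    have h2 : κ ≠ 0 := ne_of_gt hκ
    field_simp
    ring
  rw [hkey]
  have hylesqrt : O.f x * Real.sqrt κ ≤ 2 * Real.sqrt (O.a - x) := by
    have h1 : (O.f x * Real.sqrt κ)^2 ≤ (2*Real.sqrt (O.a - x))^2 := by
      rw [mul_pow, mul_pow, Real.sq_sqrt hκ.le, Real.sq_sqrt hax.le]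
      nlinarith [hlow]
    exact (pow_le_pow_iff_left₀ (by positivity) (by positivity) (by norm_num)).mp h1
  calc |(g1 (O.f x))⁻¹ + (Real.sqrt (2*κ*(O.a - x)))⁻¹| ≤ 12*M/κ^2 * O.f x := hbound
    _ = (12*M/(κ^2*Real.sqrt κ)) * (O.f x * Real.sqrt κ) := by field_simp
    _ ≤ (12*M/(κ^2*Real.sqrt κ)) * (2*Real.sqrt (O.a - x)) :=
        mul_le_mul_of_nonneg_left hylesqrt (by positivity)
    _ = 24*M/(κ^2*Real.sqrt κ) * Real.sqrt (O.a - x) := by ring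

/-- With `A(x) := f(x) − √(2(a−x)/κ(a,0))`, one has `A'(x) = O(√(a−x))`
as `x ↗ a`; in particular `A` extends continuously differentiably to `x = a` with
`A(a) = 0` and `A'(a) = 0`. -/
theorem A_deriv_bound (O : SymmetricOval) :
    (∃ C > 0, ∃ δ > 0, ∀ x : ℝ, O.a - δ < x → x < O.a →
      |deriv (fun t => O.f t - Real.sqrt (2 * (O.a - t) / (-deriv (deriv O.g) 0))) x| ≤
        C * Real.sqrt (O.a - x)) ∧
    (O.f O.a - Real.sqrt (2 * (O.a - O.a) / (-deriv (deriv O.g) 0)) = 0) ∧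
    Filter.Tendsto (fun t => O.f t - Real.sqrt (2 * (O.a - t) / (-deriv (deriv O.g) 0)))
      (nhdsWithin O.a (Set.Iio O.a)) (nhds 0) ∧
    Filter.Tendsto (deriv (fun t => O.f t - Real.sqrt (2 * (O.a - t) / (-deriv (deriv O.g) 0))))
      (nhdsWithin O.a (Set.Iio O.a)) (nhds 0) := by
  obtain ⟨C, hC, δ, hδ, hbound⟩ := oval_key O
  have hκ : 0 < -deriv (deriv O.g) 0 := by
    have := O.g_conc 0 ⟨by linarith [O.b_pos], O.b_pos⟩
    linarith
  have hcont : Continuous (fun t : ℝ => Real.sqrt (2 * (O.a - t) / (-deriv (deriv O.g) 0))) :=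
    Real.continuous_sqrt.comp ((continuous_const.mul (continuous_const.sub continuous_id)).div_const _)
  refine ⟨⟨C, hC, δ, hδ, hbound⟩, ?_, ?_, ?_⟩
  · rw [O.f_a]; simp
  · have h1 : Filter.Tendsto O.f (nhdsWithin O.a (Set.Iio O.a)) (nhds 0) := by
      have hc1 : ContinuousWithinAt O.f (Set.Icc (-O.a) O.a) O.a :=
        O.f_cont O.a ⟨by linarith [O.a_pos], le_refl _⟩
      have h2 := hc1.tendsto
      rw [O.f_a] at h2
      have h3 : nhdsWithin O.a (Set.Iio O.a) = nhdsWithin O.a (Set.Ioo (-O.a) O.a) :=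
        (nhdsWithin_Ioo_eq_nhdsLT (by linarith [O.a_pos] : -O.a < O.a)).symm
      rw [h3]
      exact h2.mono_left (nhdsWithin_mono _ Set.Ioo_subset_Icc_self)
    have h2 : Filter.Tendsto (fun t => Real.sqrt (2 * (O.a - t) / (-deriv (deriv O.g) 0)))
        (nhdsWithin O.a (Set.Iio O.a)) (nhds 0) := by
      have := (hcont.tendsto O.a).mono_left
        (nhdsWithin_le_nhds (s := Set.Iio O.a))
      simpa using this
    simpa using h1.sub h2
  · apply squeeze_zero_norm' (a := fun x => C * Real.sqrt (O.a - x))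
    · have hmem : Set.Ioo (O.a - δ) O.a ∈ nhdsWithin O.a (Set.Iio O.a) :=
        Ioo_mem_nhdsLT_of_mem ⟨by linarith, le_refl _⟩
      filter_upwards [hmem] with x hx
      rw [Real.norm_eq_abs]
      exact hbound x hx.1 hx.2
    · have hc2 : Continuous (fun x : ℝ => C * Real.sqrt (O.a - x)) :=
        continuous_const.mul (Real.continuous_sqrt.comp (continuous_const.sub continuous_id))
      have := (hc2.tendsto O.a).mono_left (nhdsWithin_le_nhds (s := Set.Iio O.a))
      simpa using this


end
end

section
/- Let Ω be a symmetric oval with boundary function f, curvature κ(a,0) = −g''(0) at (a,0), and set A(x) := f(x) − √(2(a−x)/κ(a,0)) for 0 ≤ x < a. Then the second derivative satisfies A''(x) = O(1/√(a−x)) as x ↗ a; that is, there exist C > 0 and δ > 0 such that |A''(x)| ≤ C/√(a−x) for a − δ < x < a. In particular A'' is absolutely integrable on the interval (0,a). -/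
noncomputable section

open MeasureTheory Filter Set Pointwise Classical

open scoped ContDiff in
private lemma smooth_deriv' {g : ℝ → ℝ} {s : Set ℝ} (hs : IsOpen s) (hg : ContDiffOn ℝ ∞ g s) :
    ContDiffOn ℝ ∞ (deriv g) s :=
  hg.deriv_of_isOpen hs (by exact_mod_cast le_top)

open scoped ContDiff in
private lemma smooth_hasDerivAt' {g : ℝ → ℝ} {s : Set ℝ} (hs : IsOpen s)
    (hg : ContDiffOn ℝ ∞ g s) {x : ℝ} (hx : x ∈ s) : HasDerivAt g (deriv g x) x := by
  have : DifferentiableOn ℝ g s := hg.differentiableOn (by simp)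
  exact (this.differentiableAt (hs.mem_nhds hx)).hasDerivAt

private lemma odd_deriv_of_even' {g : ℝ → ℝ} (h : ∀ y, g (-y) = g y) (y : ℝ) :
    deriv g (-y) = -deriv g y := by
  have h1 : (fun x => g (-x)) = g := funext h
  have h2 := deriv_comp_neg g y
  rw [h1] at h2; linarith

private lemma even_deriv_of_odd' {g : ℝ → ℝ} (h : ∀ y, g (-y) = -g y) (y : ℝ) :
    deriv g (-y) = deriv g y := by
  have h1 : (fun x => g (-x)) = fun x => -g x := funext h
  have h2 := deriv_comp_neg g y
  rw [h1, deriv.fun_neg] at h2; linarith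

private lemma mvt_bound' {h h' : ℝ → ℝ} {y c : ℝ} (h0 : h 0 = 0)
    (hd : ∀ t ∈ Set.Icc 0 y, HasDerivAt h (h' t) t)
    (hb : ∀ t ∈ Set.Icc 0 y, |h' t| ≤ c) (hy : 0 ≤ y) : |h y| ≤ c * y := by
  have := (convex_Icc (0:ℝ) y).norm_image_sub_le_of_norm_hasDerivWithin_le
    (f := h) (f' := h') (C := c)
    (fun t ht => (hd t ht).hasDerivWithinAt) (by simpa using hb)
    (left_mem_Icc.2 hy) (right_mem_Icc.2 hy)
  simpa [h0, Real.norm_eq_abs, abs_of_nonneg hy] using this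

open scoped ContDiff in
private lemma taylor_package' {g : ℝ → ℝ} {b a κ : ℝ} (hb : 0 < b) (hκ : 0 < κ)
    (hg : ContDiffOn ℝ ∞ g (Set.Ioo (-b) b))
    (hg0 : g 0 = a) (hg1 : deriv g 0 = 0) (hg2 : deriv (deriv g) 0 = -κ)
    (hg3 : deriv (deriv (deriv g)) 0 = 0) :
    ∃ M : ℝ, 1 ≤ M ∧ ∃ y₀ : ℝ, 0 < y₀ ∧ y₀ ≤ 1 ∧ y₀ < b ∧ M * y₀ ^ 2 ≤ κ / 4 ∧
      ∀ y ∈ Set.Icc 0 y₀,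
        |deriv (deriv g) y + κ| ≤ M * y ^ 2 ∧
        |deriv g y + κ * y| ≤ M * y ^ 3 ∧
        |g y - a + κ * y ^ 2 / 2| ≤ M * y ^ 4 := by
  have hsub : Set.Icc (0:ℝ) (b/2) ⊆ Set.Ioo (-b) b := fun t ht =>
    ⟨by linarith [ht.1], by linarith [ht.2]⟩
  have hopen : IsOpen (Set.Ioo (-b) b) := isOpen_Ioo
  have hg1' := smooth_deriv' hopen hg
  have hg2' := smooth_deriv' hopen hg1'
  have hg3' := smooth_deriv' hopen hg2'
  have hg4' := smooth_deriv' hopen hg3'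
  obtain ⟨C, hC⟩ := (isCompact_Icc (a := (0:ℝ)) (b := b/2)).exists_bound_of_continuousOn
    ((hg4'.continuousOn).mono hsub)
  set M := max C 1 with hM
  have hM1 : (1:ℝ) ≤ M := le_max_right _ _
  have hM0 : (0:ℝ) < M := by linarith
  refine ⟨M, hM1, ?_⟩
  set y₀ := min 1 (min (b/2) (Real.sqrt (κ/(8*M)))) with hy₀def
  have hsq : (0:ℝ) < Real.sqrt (κ/(8*M)) := Real.sqrt_pos.2 (by positivity)
  have hy₀pos : 0 < y₀ := by
    apply lt_min (by norm_num); exact lt_min (by linarith) hsq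
  have hy₀1 : y₀ ≤ 1 := min_le_left _ _
  have hy₀b2 : y₀ ≤ b/2 := le_trans (min_le_right _ _) (min_le_left _ _)
  have hy₀b : y₀ < b := by linarith
  have hy₀sq : M * y₀ ^ 2 ≤ κ / 4 := by
    have h1 : y₀ ≤ Real.sqrt (κ/(8*M)) := le_trans (min_le_right _ _) (min_le_right _ _)
    have h2 : y₀ ^ 2 ≤ κ/(8*M) := by
      have := Real.sq_sqrt (le_of_lt (show (0:ℝ) < κ/(8*M) by positivity))
      nlinarith [hy₀pos.le]
    calc M * y₀ ^ 2 ≤ M * (κ/(8*M)) := by nlinarith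
      _ = κ / 8 := by field_simp
      _ ≤ κ / 4 := by linarith
  refine ⟨y₀, hy₀pos, hy₀1, hy₀b, hy₀sq, ?_⟩
  have hmem : ∀ t ∈ Set.Icc (0:ℝ) y₀, t ∈ Set.Ioo (-b) b := fun t ht =>
    hsub ⟨ht.1, le_trans ht.2 hy₀b2⟩
  have hIccsub : ∀ y ∈ Set.Icc (0:ℝ) y₀, Set.Icc (0:ℝ) y ⊆ Set.Icc (0:ℝ) y₀ := fun y hy =>
    Set.Icc_subset_Icc le_rfl hy.2
  have h3 : ∀ t ∈ Set.Icc (0:ℝ) y₀, |deriv (deriv (deriv g)) t| ≤ M * t := by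
    intro t ht
    refine mvt_bound' hg3 (fun u hu => smooth_hasDerivAt' hopen hg3' (hmem u (hIccsub t ht hu)))
      (fun u hu => ?_) ht.1
    have hb4 := hC u ⟨hu.1, le_trans hu.2 (le_trans ht.2 hy₀b2)⟩
    rw [Real.norm_eq_abs] at hb4
    exact hb4.trans (le_max_left _ _)
  have h2 : ∀ t ∈ Set.Icc (0:ℝ) y₀, |deriv (deriv g) t + κ| ≤ M * t ^ 2 := by
    intro t ht
    have := mvt_bound' (h := fun u => deriv (deriv g) u + κ)
      (h' := deriv (deriv (deriv g))) (y := t) (c := M * t)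
      (by show deriv (deriv g) 0 + κ = 0; rw [hg2]; ring)
      (fun u hu => (smooth_hasDerivAt' hopen hg2' (hmem u (hIccsub t ht hu))).add_const κ)
      (fun u hu => le_trans (h3 u (hIccsub t ht hu)) (by nlinarith [hu.2, ht.1, hu.1]))
      ht.1
    calc |deriv (deriv g) t + κ| ≤ M * t * t := this
      _ = M * t ^ 2 := by ring
  have h1 : ∀ t ∈ Set.Icc (0:ℝ) y₀, |deriv g t + κ * t| ≤ M * t ^ 3 := by
    intro t ht
    have := mvt_bound' (h := fun u => deriv g u + κ * u)
      (h' := fun u => deriv (deriv g) u + κ) (y := t) (c := M * t ^ 2)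
      (by show deriv g 0 + κ * 0 = 0; rw [hg1]; ring)
      (fun u hu => (smooth_hasDerivAt' hopen hg1' (hmem u (hIccsub t ht hu))).add
        (by simpa using (hasDerivAt_id u).const_mul κ))
      (fun u hu => le_trans (h2 u (hIccsub t ht hu))
        (mul_le_mul_of_nonneg_left (pow_le_pow_left₀ hu.1 hu.2 2) hM0.le))
      ht.1
    calc |deriv g t + κ * t| ≤ M * t ^ 2 * t := this
      _ = M * t ^ 3 := by ring
  have h0 : ∀ t ∈ Set.Icc (0:ℝ) y₀, |g t - a + κ * t ^ 2 / 2| ≤ M * t ^ 4 := by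
    intro t ht
    have := mvt_bound' (h := fun u => g u - a + κ * u ^ 2 / 2)
      (h' := fun u => deriv g u + κ * u) (y := t) (c := M * t ^ 3)
      (by show g 0 - a + κ * 0 ^ 2 / 2 = 0; rw [hg0]; ring)
      (fun u hu => by
        have hd : HasDerivAt (fun u : ℝ => κ * u ^ 2 / 2) (κ * u) u := by
          have := ((hasDerivAt_pow 2 u).const_mul κ).div_const 2
          simpa using this.congr_deriv (by ring)
        exact (((smooth_hasDerivAt' hopen hg (hmem u (hIccsub t ht hu))).sub_const a).add hd))
      (fun u hu => le_trans (h1 u (hIccsub t ht hu))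
        (mul_le_mul_of_nonneg_left (pow_le_pow_left₀ hu.1 hu.2 3) hM0.le))
      ht.1
    calc |g t - a + κ * t ^ 2 / 2| ≤ M * t ^ 3 * t := this
      _ = M * t ^ 4 := by ring
  exact fun y hy => ⟨h2 y hy, h1 y hy, h0 y hy⟩

private lemma sqrt_lemA' {a c : ℝ} (hc : 0 < c) {x : ℝ} (hx : x < a) :
    HasDerivAt (fun t => Real.sqrt (2 * (a - t) / c))
      (-(c * Real.sqrt (2 * (a - x) / c))⁻¹) x := by
  have hax : (0:ℝ) < a - x := sub_pos.2 hx
  have hu : (0:ℝ) < 2 * (a - x) / c := by positivity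
  have hw : 0 < Real.sqrt (2 * (a - x) / c) := Real.sqrt_pos.2 hu
  have hinner : HasDerivAt (fun t : ℝ => 2 * (a - t) / c) (-2 / c) x := by
    have : HasDerivAt (fun t : ℝ => 2 * (a - t) / c) ((2 * (0 - 1)) / c) x :=
      (((hasDerivAt_const x a).sub (hasDerivAt_id x)).const_mul 2).div_const c
    simpa using this
  have h := (Real.hasDerivAt_sqrt (ne_of_gt hu)).comp x hinner
  refine h.congr_deriv ?_
  set w := Real.sqrt (2 * (a - x) / c) with hwdef
  have hw' : w ≠ 0 := ne_of_gt hw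
  field_simp

private lemma sqrt_lemC' {a c : ℝ} (hc : 0 < c) {x : ℝ} (hx : x < a) :
    HasDerivAt (deriv (fun t => Real.sqrt (2 * (a - t) / c)))
      (-(c ^ 2 * Real.sqrt (2 * (a - x) / c) ^ 3)⁻¹) x := by
  have hax : (0:ℝ) < a - x := sub_pos.2 hx
  have hu : (0:ℝ) < 2 * (a - x) / c := by positivity
  have hw : 0 < Real.sqrt (2 * (a - x) / c) := Real.sqrt_pos.2 hu
  have hG : HasDerivAt (fun t => -(c * Real.sqrt (2 * (a - t) / c))⁻¹)
      (-(c ^ 2 * Real.sqrt (2 * (a - x) / c) ^ 3)⁻¹) x := by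
    have h1 : HasDerivAt (fun t => c * Real.sqrt (2 * (a - t) / c))
        (c * -(c * Real.sqrt (2 * (a - x) / c))⁻¹) x := (sqrt_lemA' hc hx).const_mul c
    have h2 := (h1.inv (by positivity)).neg
    refine h2.congr_deriv ?_
    set w := Real.sqrt (2 * (a - x) / c) with hwdef
    have hw' : w ≠ 0 := ne_of_gt hw
    field_simp
  apply hG.congr_of_eventuallyEq
  filter_upwards [Iio_mem_nhds hx] with t ht
  exact (sqrt_lemA' hc ht).deriv

private lemma abs4' (a b c d : ℝ) : |a - b + c - d| ≤ |a| + |b| + |c| + |d| := by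
  have h1 : |a - b + c - d| ≤ |a - b + c| + |d| := by
    simpa [sub_eq_add_neg] using abs_add_le (a - b + c) (-d)
  have h2 : |a - b + c| ≤ |a - b| + |c| := abs_add_le _ _
  have h3 : |a - b| ≤ |a| + |b| := by
    simpa [sub_eq_add_neg] using abs_add_le a (-b)
  linarith

set_option maxHeartbeats 2000000 in
private lemma key_estimate' {κ M y₀ y P Q ax : ℝ}
    (hκ : 0 < κ) (hM : 1 ≤ M) (hy : 0 < y) (hyy₀ : y ≤ y₀) (hy₀1 : y₀ ≤ 1)
    (hMy₀ : M * y₀ ^ 2 ≤ κ / 4)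
    (hax : 0 < ax)
    (hP : |P + κ * y| ≤ M * y ^ 3)
    (hQ : |Q + κ| ≤ M * y ^ 2)
    (he0 : |(-ax) + κ * y ^ 2 / 2| ≤ M * y ^ 4) :
    |(-(Q * P⁻¹) / P ^ 2) + (κ ^ 2 * Real.sqrt (2 * ax / κ) ^ 3)⁻¹| ≤
      ((8 * (4*κ^2*M + 3*κ*M^2 + M^3) / κ^5 + 112 * M / κ^3) * Real.sqrt κ) / Real.sqrt ax := by
  have hM0 : (0:ℝ) < M := by linarith
  have hy1 : y ≤ 1 := le_trans hyy₀ hy₀1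
  have hMy2 : M * y ^ 2 ≤ κ / 4 := by
    nlinarith [mul_le_mul_of_nonneg_left (pow_le_pow_left₀ hy.le hyy₀ 2) hM0.le]
  set w := Real.sqrt (2 * ax / κ) with hwdef
  have hwpos : 0 < w := Real.sqrt_pos.2 (by positivity)
  have hwsq : w ^ 2 = 2 * ax / κ := Real.sq_sqrt (by positivity)
  clear_value w
  -- bounds on P
  have hPabs := abs_le.1 hP
  have hMy3 : M * y ^ 3 ≤ κ / 4 * y := by nlinarith
  have hPneg : P < 0 := by nlinarith [hPabs.2]
  have hPub : -P ≤ 2 * κ * y := by nlinarith [hPabs.1]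
  have hPlb : κ * y / 2 ≤ -P := by nlinarith [hPabs.2]
  have hPne : P ≠ 0 := ne_of_lt hPneg
  have hyne : y ≠ 0 := ne_of_gt hy
  have hκne : κ ≠ 0 := ne_of_gt hκ
  set CN := 4*κ^2*M + 3*κ*M^2 + M^3 with hCN
  have hCN0 : 0 < CN := by positivity
  clear_value CN
  -- Term 1 estimate
  have hT1 : |(-(Q * P⁻¹) / P ^ 2) + (κ^2*y^3)⁻¹| ≤ (8 * CN / κ^5) / y := by
    have hid1 : (-(Q * P⁻¹) / P ^ 2) + (κ^2*y^3)⁻¹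
        = (P^3 - κ^2*y^3*Q) / (κ^2*y^3*P^3) := by field_simp; ring
    set e1 := P + κ * y with he1def
    set e2 := Q + κ with he2def
    have hNid : P^3 - κ^2*y^3*Q
        = 3*κ^2*y^2*e1 - 3*κ*y*e1^2 + e1^3 - κ^2*y^3*e2 := by
      simp only [he1def, he2def]; ring
    have hNbd : |P^3 - κ^2*y^3*Q| ≤ CN * y^5 := by
      rw [hNid]
      have t1 : |3*κ^2*y^2*e1| ≤ 3*κ^2*y^2 * (M*y^3) := by
        rw [abs_mul, abs_of_nonneg (by positivity : (0:ℝ) ≤ 3*κ^2*y^2)]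
        exact mul_le_mul_of_nonneg_left hP (by positivity)
      have t2 : |3*κ*y*e1^2| ≤ 3*κ*y * (M*y^3)^2 := by
        rw [abs_mul, abs_of_nonneg (by positivity : (0:ℝ) ≤ 3*κ*y), abs_pow]
        exact mul_le_mul_of_nonneg_left (pow_le_pow_left₀ (abs_nonneg _) hP 2) (by positivity)
      have t3 : |e1^3| ≤ (M*y^3)^3 := by
        rw [abs_pow]
        exact pow_le_pow_left₀ (abs_nonneg _) hP 3
      have t4 : |κ^2*y^3*e2| ≤ κ^2*y^3 * (M*y^2) := by
        rw [abs_mul, abs_of_nonneg (by positivity : (0:ℝ) ≤ κ^2*y^3)]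
        exact mul_le_mul_of_nonneg_left hQ (by positivity)
      have htri := abs4' (3*κ^2*y^2*e1) (3*κ*y*e1^2) (e1^3) (κ^2*y^3*e2)
      have hy7 : y^7 ≤ y^5 := pow_le_pow_of_le_one hy.le hy1 (by norm_num)
      have hy9 : y^9 ≤ y^5 := pow_le_pow_of_le_one hy.le hy1 (by norm_num)
      have u1 : 3*κ^2*y^2 * (M*y^3) = 3*κ^2*M*y^5 := by ring
      have u2 : 3*κ*y * (M*y^3)^2 ≤ 3*κ*M^2*y^5 := by
        calc 3*κ*y * (M*y^3)^2 = 3*κ*M^2*y^7 := by ring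
          _ ≤ 3*κ*M^2*y^5 := mul_le_mul_of_nonneg_left hy7 (by positivity)
      have u3 : (M*y^3)^3 ≤ M^3*y^5 := by
        calc (M*y^3)^3 = M^3*y^9 := by ring
          _ ≤ M^3*y^5 := mul_le_mul_of_nonneg_left hy9 (by positivity)
      have u4 : κ^2*y^3 * (M*y^2) = κ^2*M*y^5 := by ring
      have : CN * y^5 = 3*κ^2*M*y^5 + 3*κ*M^2*y^5 + M^3*y^5 + κ^2*M*y^5 := by
        rw [hCN]; ring
      linarith
    have hDbd : κ^5*y^6/8 ≤ |κ^2*y^3*P^3| := by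
      have h1 : |κ^2*y^3*P^3| = κ^2*y^3 * (-P)^3 := by
        rw [abs_mul, abs_of_nonneg (by positivity : (0:ℝ) ≤ κ^2*y^3), abs_pow,
          abs_of_neg hPneg]
      rw [h1]
      have h2 : (κ*y/2)^3 ≤ (-P)^3 := pow_le_pow_left₀ (by positivity) hPlb 3
      calc κ^5*y^6/8 = κ^2*y^3 * (κ*y/2)^3 := by ring
        _ ≤ κ^2*y^3 * (-P)^3 := mul_le_mul_of_nonneg_left h2 (by positivity)
    rw [hid1, abs_div]
    calc |P^3 - κ^2*y^3*Q| / |κ^2*y^3*P^3| ≤ (CN * y^5) / (κ^5*y^6/8) := by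
          apply div_le_div₀ (by positivity) hNbd (by positivity) hDbd
      _ = (8 * CN / κ^5) / y := by field_simp
  -- Term 2 estimate
  have hwyp : |w^2 - y^2| ≤ 2*M*y^4/κ := by
    have h1 : w^2 - y^2 = -(2/κ) * ((-ax) + κ * y^2/2) := by
      rw [hwsq]; field_simp; ring
    rw [h1, abs_mul, abs_neg, abs_of_nonneg (by positivity : (0:ℝ) ≤ 2/κ)]
    calc 2/κ * |(-ax) + κ * y^2/2| ≤ 2/κ * (M * y^4) :=
          mul_le_mul_of_nonneg_left he0 (by positivity)
      _ = 2*M*y^4/κ := by ring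
  have hwyp2 : |w^2 - y^2| ≤ y^2/2 := by
    calc |w^2 - y^2| ≤ 2*M*y^4/κ := hwyp
      _ = (M*y^2) * (2*y^2/κ) := by ring
      _ ≤ (κ/4) * (2*y^2/κ) := mul_le_mul_of_nonneg_right hMy2 (by positivity)
      _ = y^2/2 := by field_simp; ring
  have hwabs := abs_le.1 hwyp2
  have hwlb : y/2 ≤ w := by
    have hsq : (y/2)^2 ≤ w^2 := by nlinarith [hwabs.1]
    have h := Real.sqrt_le_sqrt hsq
    rwa [Real.sqrt_sq (by positivity), Real.sqrt_sq hwpos.le] at h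
  have hwub : w ≤ 2*y := by
    have hsq : w^2 ≤ (2*y)^2 := by nlinarith [hwabs.2]
    have h := Real.sqrt_le_sqrt hsq
    rwa [Real.sqrt_sq hwpos.le, Real.sqrt_sq (by positivity)] at h
  have hwne : w ≠ 0 := ne_of_gt hwpos
  have hT2 : |(κ^2*w^3)⁻¹ - (κ^2*y^3)⁻¹| ≤ (112 * M / κ^3) / y := by
    have hid2 : (κ^2*w^3)⁻¹ - (κ^2*y^3)⁻¹ = (y^3 - w^3)/(κ^2*w^3*y^3) := by
      field_simp
    have hyw : |y - w| ≤ 2*M*y^3/κ := by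
      have h1 : |y - w| * (y + w) = |y^2 - w^2| := by
        rw [← abs_of_nonneg (by positivity : (0:ℝ) ≤ y + w), ← abs_mul]
        congr 1; ring
      have h2 : |y^2 - w^2| ≤ 2*M*y^4/κ := by rw [abs_sub_comm]; exact hwyp
      have h3 : |y - w| * y ≤ |y - w| * (y + w) :=
        mul_le_mul_of_nonneg_left (by linarith) (abs_nonneg _)
      have h4 : |y - w| * y ≤ 2*M*y^4/κ := by rw [h1] at h3; linarith
      have h4 : |y - w| * y ≤ (2*M*y^3/κ) * y := by
        calc |y - w| * y ≤ |y - w| * (y + w) := h3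
          _ = |y^2 - w^2| := h1
          _ ≤ 2*M*y^4/κ := h2
          _ = (2*M*y^3/κ) * y := by ring
      exact le_of_mul_le_mul_right h4 hy
    have hcube : |y^3 - w^3| ≤ 14*M*y^5/κ := by
      have hfac : y^3 - w^3 = (y - w) * (y^2 + y*w + w^2) := by ring
      rw [hfac, abs_mul, abs_of_nonneg (by positivity : (0:ℝ) ≤ y^2 + y*w + w^2)]
      have hsum : y^2 + y*w + w^2 ≤ 7*y^2 := by nlinarith [hwub, hwpos.le, hy.le]
      calc |y - w| * (y^2 + y*w + w^2) ≤ (2*M*y^3/κ) * (7*y^2) :=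
            mul_le_mul hyw hsum (by positivity) (by positivity)
        _ = 14*M*y^5/κ := by ring
    have hden : κ^2*y^6/8 ≤ |κ^2*w^3*y^3| := by
      have h1 : |κ^2*w^3*y^3| = κ^2*w^3*y^3 := abs_of_nonneg (by positivity)
      have h2 : (y/2)^3 ≤ w^3 := pow_le_pow_left₀ (by positivity) hwlb 3
      rw [h1]
      calc κ^2*y^6/8 = (κ^2*y^3) * (y/2)^3 := by ring
        _ ≤ (κ^2*y^3) * w^3 := mul_le_mul_of_nonneg_left h2 (by positivity)
        _ = κ^2*w^3*y^3 := by ring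
    rw [hid2, abs_div]
    calc |y^3 - w^3| / |κ^2*w^3*y^3| ≤ (14*M*y^5/κ) / (κ^2*y^6/8) :=
          div_le_div₀ (by positivity) hcube (by positivity) hden
      _ = (112 * M / κ^3) / y := by field_simp; ring
  -- combine
  have hsplit : (-(Q * P⁻¹) / P ^ 2) + (κ^2*w^3)⁻¹
      = ((-(Q * P⁻¹) / P ^ 2) + (κ^2*y^3)⁻¹) + ((κ^2*w^3)⁻¹ - (κ^2*y^3)⁻¹) := by ring
  have hcomb : |(-(Q * P⁻¹) / P ^ 2) + (κ^2*w^3)⁻¹| ≤ (8*CN/κ^5 + 112*M/κ^3)/y := by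
    rw [hsplit]
    calc |_ + _| ≤ |(-(Q * P⁻¹) / P ^ 2) + (κ^2*y^3)⁻¹| + |(κ^2*w^3)⁻¹ - (κ^2*y^3)⁻¹| :=
          abs_add_le _ _
      _ ≤ (8 * CN / κ^5) / y + (112 * M / κ^3) / y := add_le_add hT1 hT2
      _ = (8*CN/κ^5 + 112*M/κ^3)/y := by ring
  -- pass to sqrt
  have haxle : ax ≤ κ * y^2 := by
    have h1 := (abs_le.1 he0).1
    nlinarith [mul_le_mul_of_nonneg_right hMy2 (sq_nonneg y)]
  have hsq2 : Real.sqrt ax ≤ Real.sqrt κ * y := by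
    rw [show Real.sqrt κ * y = Real.sqrt (κ * y^2) by
      rw [Real.sqrt_mul hκ.le, Real.sqrt_sq hy.le]]
    exact Real.sqrt_le_sqrt haxle
  have hsaxpos : 0 < Real.sqrt ax := Real.sqrt_pos.2 hax
  have hC₀0 : 0 < 8*CN/κ^5 + 112*M/κ^3 := by positivity
  refine le_trans hcomb ?_
  rw [div_le_div_iff₀ hy hsaxpos]
  calc (8*CN/κ^5 + 112*M/κ^3) * Real.sqrt ax
      ≤ (8*CN/κ^5 + 112*M/κ^3) * (Real.sqrt κ * y) :=
        mul_le_mul_of_nonneg_left hsq2 hC₀0.le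
    _ = (8 * CN / κ^5 + 112 * M / κ^3) * Real.sqrt κ * y := by ring


namespace SymmetricOval
variable (O : SymmetricOval)

open scoped ContDiff in
lemma gsm' : ContDiffOn ℝ ∞ O.g (Set.Ioo (-O.b) O.b) := O.g_smooth.of_le (by simp)
open scoped ContDiff in
lemma fsm' : ContDiffOn ℝ ∞ O.f (Set.Ioo (-O.a) O.a) := O.f_smooth.of_le (by simp)

lemma kappa_pos' : 0 < -deriv (deriv O.g) 0 := by
  have := O.g_conc 0 ⟨neg_neg_iff_pos.2 O.b_pos, O.b_pos⟩
  linarith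

lemma g_zero' : O.g 0 = O.a := by
  have := O.g_inv_f O.a ⟨le_of_lt O.a_pos, le_refl _⟩
  rwa [O.f_a] at this

lemma deriv_g_odd' (y : ℝ) : deriv O.g (-y) = -deriv O.g y := odd_deriv_of_even' O.g_even y

lemma deriv_g_zero' : deriv O.g 0 = 0 := by
  have := O.deriv_g_odd' 0; rw [neg_zero] at this; linarith

lemma deriv3_g_zero' : deriv (deriv (deriv O.g)) 0 = 0 := by
  have h2 : ∀ y, deriv (deriv O.g) (-y) = deriv (deriv O.g) y :=
    even_deriv_of_odd' O.deriv_g_odd'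
  have h3 := odd_deriv_of_even' h2 0
  rw [neg_zero] at h3; linarith

lemma mem_f' {x : ℝ} (hx : x ∈ Set.Ioo 0 O.a) : x ∈ Set.Ioo (-O.a) O.a :=
  ⟨lt_trans (neg_neg_iff_pos.2 O.a_pos) hx.1, hx.2⟩

lemma mem_g' {y : ℝ} (hy : y ∈ Set.Ioo 0 O.b) : y ∈ Set.Ioo (-O.b) O.b :=
  ⟨lt_trans (neg_neg_iff_pos.2 O.b_pos) hy.1, hy.2⟩

lemma f_hasDerivAt' {x : ℝ} (hx : x ∈ Set.Ioo 0 O.a) :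
    HasDerivAt O.f (deriv O.f x) x :=
  smooth_hasDerivAt' isOpen_Ioo O.fsm' (O.mem_f' hx)

lemma f_deriv1' {x : ℝ} (hx : x ∈ Set.Ioo 0 O.a) (hfy : O.f x ∈ Set.Ioo 0 O.b)
    (hgp : deriv O.g (O.f x) ≠ 0) : deriv O.f x = (deriv O.g (O.f x))⁻¹ := by
  have hfd := O.f_hasDerivAt' hx
  have hgd : HasDerivAt O.g (deriv O.g (O.f x)) (O.f x) :=
    smooth_hasDerivAt' isOpen_Ioo O.gsm' (O.mem_g' hfy)
  have hcomp := hgd.comp x hfd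
  have hid : (O.g ∘ O.f) =ᶠ[nhds x] id := by
    filter_upwards [Ioo_mem_nhds hx.1 hx.2] with t ht
    exact O.g_inv_f t ⟨ht.1.le, ht.2.le⟩
  have h1 : HasDerivAt id (deriv O.g (O.f x) * deriv O.f x) x :=
    hcomp.congr_of_eventuallyEq hid.symm
  have h2 : deriv O.g (O.f x) * deriv O.f x = 1 := h1.unique (hasDerivAt_id x)
  field_simp at h2 ⊢
  linarith

lemma f_deriv2' {x : ℝ} (hx : x ∈ Set.Ioo 0 O.a) (hfy : O.f x ∈ Set.Ioo 0 O.b)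
    (hgp : deriv O.g (O.f x) ≠ 0) :
    HasDerivAt (deriv O.f)
      (-(deriv (deriv O.g) (O.f x) * (deriv O.g (O.f x))⁻¹) / deriv O.g (O.f x) ^ 2) x := by
  have hfd := O.f_hasDerivAt' hx
  have hgpd : HasDerivAt (deriv O.g) (deriv (deriv O.g) (O.f x)) (O.f x) :=
    smooth_hasDerivAt' isOpen_Ioo (smooth_deriv' isOpen_Ioo O.gsm') (O.mem_g' hfy)
  have hcomp : HasDerivAt (fun t => deriv O.g (O.f t))
      (deriv (deriv O.g) (O.f x) * deriv O.f x) x := hgpd.comp x hfd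
  have hinv := hcomp.inv hgp
  rw [O.f_deriv1' hx hfy hgp] at hinv
  apply hinv.congr_of_eventuallyEq
  have hcont : ContinuousAt (fun t => deriv O.g (O.f t)) x :=
    hgpd.continuousAt.comp hfd.continuousAt
  have hne : ∀ᶠ t in nhds x, deriv O.g (O.f t) ≠ 0 := hcont.eventually_ne hgp
  have hmem1 : ∀ᶠ t in nhds x, t ∈ Set.Ioo 0 O.a :=
    Filter.eventually_iff_exists_mem.2 ⟨_, Ioo_mem_nhds hx.1 hx.2, fun t ht => ht⟩
  have hmem2 : ∀ᶠ t in nhds x, O.f t ∈ Set.Ioo 0 O.b :=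
    hfd.continuousAt.eventually_mem (isOpen_Ioo.mem_nhds hfy)
  filter_upwards [hne, hmem1, hmem2] with t h1 h2 h3
  exact O.f_deriv1' h2 h3 h1

end SymmetricOval


set_option maxHeartbeats 2000000 in
/-- With `A(x) := f(x) − √(2(a−x)/κ(a,0))`, the second derivative satisfies
`A''(x) = O(1/√(a−x))` as `x ↗ a`; in particular `A''` is absolutely integrable on `(0,a)`. -/
theorem A_second_deriv_bound (O : SymmetricOval) :
    (∃ C > 0, ∃ δ > 0, ∀ x : ℝ, O.a - δ < x → x < O.a →
      |deriv (deriv (fun t => O.f t - Real.sqrt (2 * (O.a - t) / (-deriv (deriv O.g) 0)))) x| ≤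
        C / Real.sqrt (O.a - x)) ∧
    MeasureTheory.IntegrableOn
      (deriv (deriv (fun t => O.f t - Real.sqrt (2 * (O.a - t) / (-deriv (deriv O.g) 0)))))
      (Set.Ioo 0 O.a) := by
  have hκ : 0 < -deriv (deriv O.g) 0 := O.kappa_pos'
  set κ := -deriv (deriv O.g) 0 with hκdef
  obtain ⟨M, hM1, y₀, hy₀pos, hy₀1, hy₀b, hy₀sq, htay⟩ :=
    taylor_package' O.b_pos hκ O.gsm' O.g_zero' O.deriv_g_zero'
      (by rw [hκdef, neg_neg]) O.deriv3_g_zero'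
  have hM0 : (0:ℝ) < M := by linarith
  -- choose threshold x₁
  have haIcc : O.a ∈ Set.Icc (-O.a) O.a := ⟨by linarith [O.a_pos], le_rfl⟩
  have hfa_cont : ContinuousWithinAt O.f (Set.Icc (-O.a) O.a) O.a := O.f_cont O.a haIcc
  have hmem : O.f ⁻¹' (Set.Iio y₀) ∈ nhdsWithin O.a (Set.Icc (-O.a) O.a) := by
    apply hfa_cont
    rw [O.f_a]
    exact Iio_mem_nhds hy₀pos
  rw [Metric.mem_nhdsWithin_iff] at hmem
  obtain ⟨ε, hε, hball⟩ := hmem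
  set x₁ := max (O.a - ε/2) (O.a/2) with hx₁def
  have hx₁a : x₁ < O.a := max_lt (by linarith) (by linarith [O.a_pos])
  have hx₁0 : 0 < x₁ := lt_of_lt_of_le (by linarith [O.a_pos]) (le_max_right _ _)
  set C := (8 * (4*κ^2*M + 3*κ*M^2 + M^3) / κ^5 + 112 * M / κ^3) * Real.sqrt κ with hCdef
  have hC0 : 0 < C := by positivity
  -- the key pointwise bound
  have hkey : ∀ x : ℝ, x₁ < x → x < O.a →
      |deriv (deriv (fun t => O.f t - Real.sqrt (2 * (O.a - t) / κ))) x| ≤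
        C / Real.sqrt (O.a - x) := by
    intro x hx1 hxa
    have hx0 : 0 < x := lt_trans hx₁0 hx1
    have hxIoo : x ∈ Set.Ioo 0 O.a := ⟨hx0, hxa⟩
    have hxball : x ∈ Metric.ball O.a ε ∩ Set.Icc (-O.a) O.a := by
      constructor
      · rw [Metric.mem_ball, Real.dist_eq, abs_of_neg (by linarith : x - O.a < 0)]
        have := le_max_left (O.a - ε/2) (O.a/2)
        rw [← hx₁def] at this
        linarith
      · exact ⟨by linarith [O.a_pos], hxa.le⟩
    have hfxy₀ : O.f x < y₀ := hball hxball
    have hfxpos : 0 < O.f x := by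
      have := O.f_anti ⟨hx0.le, hxa.le⟩ ⟨O.a_pos.le, le_rfl⟩ hxa
      rwa [O.f_a] at this
    have hyIoo : O.f x ∈ Set.Ioo 0 O.b := ⟨hfxpos, lt_trans hfxy₀ hy₀b⟩
    obtain ⟨hQ, hP, h0⟩ := htay (O.f x) ⟨hfxpos.le, hfxy₀.le⟩
    have hMy2 : M * (O.f x)^2 ≤ κ/4 := by
      nlinarith [mul_le_mul_of_nonneg_left (pow_le_pow_left₀ hfxpos.le hfxy₀.le 2) hM0.le,
        hy₀sq]
    have hMy3 : M * (O.f x)^3 ≤ κ/4 * O.f x := by nlinarith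
    have hgplt : deriv O.g (O.f x) < 0 := by
      have h1 := (abs_le.1 hP).2
      nlinarith
    have hgpne : deriv O.g (O.f x) ≠ 0 := ne_of_lt hgplt
    have hf2 := O.f_deriv2' hxIoo hyIoo hgpne
    have hs2 := sqrt_lemC' (a := O.a) hκ hxa
    have hAd : deriv (fun t => O.f t - Real.sqrt (2 * (O.a - t) / κ)) =ᶠ[nhds x]
        fun t => deriv O.f t - deriv (fun t => Real.sqrt (2 * (O.a - t) / κ)) t := by
      filter_upwards [Ioo_mem_nhds hx0 hxa] with t ht
      exact deriv_sub (O.f_hasDerivAt' ht).differentiableAt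
        (sqrt_lemA' hκ ht.2).differentiableAt
    have hA2 : HasDerivAt (deriv (fun t => O.f t - Real.sqrt (2 * (O.a - t) / κ)))
        ((-(deriv (deriv O.g) (O.f x) * (deriv O.g (O.f x))⁻¹) / deriv O.g (O.f x) ^ 2)
          - (-(κ ^ 2 * Real.sqrt (2 * (O.a - x) / κ) ^ 3)⁻¹)) x :=
      (hf2.sub hs2).congr_of_eventuallyEq hAd
    rw [hA2.deriv, sub_neg_eq_add]
    have hax : 0 < O.a - x := by linarith
    have hge : O.g (O.f x) = x := O.g_inv_f x ⟨hx0.le, hxa.le⟩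
    have he0 : |(-(O.a - x)) + κ * (O.f x) ^ 2 / 2| ≤ M * (O.f x) ^ 4 := by
      have heq : -(O.a - x) + κ * (O.f x) ^ 2 / 2
          = O.g (O.f x) - O.a + κ * (O.f x) ^ 2 / 2 := by rw [hge]; ring
      rw [heq]; exact h0
    exact key_estimate' hκ hM1 hfxpos hfxy₀.le hy₀1 hy₀sq hax hP hQ he0
  constructor
  · refine ⟨C, hC0, O.a - x₁, by linarith, fun x hx1 hxa => ?_⟩
    exact hkey x (by linarith) hxa
  · -- integrability
    have hsmA : ContDiffOn ℝ (⊤ : ℕ∞) (fun t => O.f t - Real.sqrt (2 * (O.a - t) / κ))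
        (Set.Ioo (-O.a) O.a) := by
      apply ContDiffOn.sub O.fsm'
      intro t ht
      have hut : (2 * (O.a - t) / κ) ≠ 0 := by
        have hta : 0 < O.a - t := by linarith [ht.2]
        positivity
      have hinner : ContDiffAt ℝ (⊤ : ℕ∞) (fun t : ℝ => 2 * (O.a - t) / κ) t :=
        ((contDiff_const.mul (contDiff_const.sub contDiff_id)).div_const κ).contDiffAt
      exact ((Real.contDiffAt_sqrt hut).comp t hinner).contDiffWithinAt
    have hcont2 : ContinuousOn
        (deriv (deriv (fun t => O.f t - Real.sqrt (2 * (O.a - t) / κ))))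
        (Set.Ioo (-O.a) O.a) :=
      (smooth_deriv' isOpen_Ioo (smooth_deriv' isOpen_Ioo hsmA)).continuousOn
    have hsub1 : Set.Icc 0 x₁ ⊆ Set.Ioo (-O.a) O.a := fun t ht =>
      ⟨by linarith [O.a_pos, ht.1], lt_of_le_of_lt ht.2 hx₁a⟩
    have hint1 : IntegrableOn
        (deriv (deriv (fun t => O.f t - Real.sqrt (2 * (O.a - t) / κ)))) (Set.Icc 0 x₁) :=
      (hcont2.mono hsub1).integrableOn_Icc
    have hle : x₁ ≤ O.a := hx₁a.le
    have hri : IntegrableOn (fun x => C * (O.a - x) ^ (-(1/2) : ℝ)) (Set.Ioc x₁ O.a) := by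
      have h1 : IntervalIntegrable (fun t : ℝ => t ^ (-(1/2) : ℝ)) volume 0 (O.a - x₁) :=
        intervalIntegral.intervalIntegrable_rpow' (by norm_num)
      have h2 := (h1.comp_sub_left O.a).symm
      rw [show O.a - 0 = O.a by ring, show O.a - (O.a - x₁) = x₁ by ring] at h2
      have h3 := (intervalIntegrable_iff_integrableOn_Ioc_of_le hle).1 h2
      exact h3.const_mul C
    have hsub2 : Set.Ioo x₁ O.a ⊆ Set.Ioo (-O.a) O.a := fun t ht =>
      ⟨by linarith [O.a_pos, hx₁0, ht.1], ht.2⟩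
    have hint2 : IntegrableOn
        (deriv (deriv (fun t => O.f t - Real.sqrt (2 * (O.a - t) / κ))))
        (Set.Ioo x₁ O.a) := by
      apply Integrable.mono' (hri.mono_set Set.Ioo_subset_Ioc_self)
      · exact (hcont2.mono hsub2).aestronglyMeasurable measurableSet_Ioo
      · rw [ae_restrict_iff' measurableSet_Ioo]
        refine MeasureTheory.ae_of_all _ fun x hx => ?_
        have hb := hkey x hx.1 hx.2
        rw [Real.norm_eq_abs]
        refine le_trans hb (le_of_eq ?_)
        rw [Real.rpow_neg (by linarith [hx.2] : (0:ℝ) ≤ O.a - x), ← Real.sqrt_eq_rpow,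
          div_eq_mul_inv]
    exact (hint1.union hint2).mono_set (fun x hx => by
      rcases le_or_gt x x₁ with h | h
      · exact Or.inl ⟨hx.1.le, h⟩
      · exact Or.inr ⟨h, hx.2⟩)

end
end
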